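/- arXiv:2106.02724 — 3 statements merged into one kernel-verified Lean document; each statement's English description precedes it below -/
import Mathlib

section
/- Under the Yule model with n leaves, for k ≤ l the covariance of F-matrix entries in the same row satisfies Cov(F_{n-1,k-1}, F_{n-1,l-1}) = k(k-1)[l(l+1) + n(n-2l-1)] / ((n-1)²(n-2)). -/
open scoped Classical

/-- Collapse the pair of lineage labels `{a, b}`: the larger label is merged
into the smaller one and all larger labels are shifted down by one. -/
def collapse (a b x : ℕ) : ℕ :=
  if x = max a b then min a b else if max a b < x then x - 1 else x

/-- The lineage map of the coalescent after `s` merge events: `chainMap n ω s i`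
is the label of the lineage currently containing leaf `i`, where `ω` lists the
pair of lineages merged at each step. -/
def chainMap (n : ℕ) (ω : Fin (n - 1) → Fin n × Fin n) : ℕ → Fin n → ℕ
  | 0 => fun i => (i : ℕ)
  | s + 1 => fun i =>
      if h : s < n - 1 then
        collapse ((ω ⟨s, h⟩).1 : ℕ) ((ω ⟨s, h⟩).2 : ℕ) (chainMap n ω s i)
      else chainMap n ω s i

/-- `ω` is a valid sequence of coalescent merge choices: at step `s` (when
`n - s` lineages remain) an unordered pair of the `n - s` current lineages is
chosen. -/
def ValidSeq (n : ℕ) (ω : Fin (n - 1) → Fin n × Fin n) : Prop :=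
  ∀ s : Fin (n - 1), ((ω s).1 : ℕ) < ((ω s).2 : ℕ) ∧ ((ω s).2 : ℕ) < n - (s : ℕ)

/-- The sample space of the Yule / Kingman coalescent with `n` leaves: all
sequences of merge choices, each such sequence being equally likely (at every
step a uniformly chosen pair of the extant lineages merges). -/
noncomputable def coalSpace (n : ℕ) : Finset (Fin (n - 1) → Fin n × Fin n) :=
  Finset.univ.filter (ValidSeq n)

/-- The block (set of leaves) of the lineage containing leaf `i` when `k`
lineages remain. -/
noncomputable def blockOf (n : ℕ) (ω : Fin (n - 1) → Fin n × Fin n) (k : ℕ)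
    (i : Fin n) : Finset (Fin n) :=
  Finset.univ.filter (fun j => chainMap n ω (n - k) j = chainMap n ω (n - k) i)

/-- `Zext n ω i k`: leaf `i` is still an external branch (a singleton lineage)
when `k` lineages remain. -/
def Zext (n : ℕ) (ω : Fin (n - 1) → Fin n × Fin n) (i : Fin n) (k : ℕ) : Prop :=
  blockOf n ω k i = {i}

/-- The partition (set of blocks) of the leaves when `k` lineages remain. -/
noncomputable def blocksAt (n : ℕ) (ω : Fin (n - 1) → Fin n × Fin n) (k : ℕ) :
    Finset (Finset (Fin n)) :=
  Finset.univ.image (fun i => blockOf n ω k i)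

/-- The F-matrix of the ranked tree shape generated by the coalescent `ω`:
`FmatOf n ω i j` is the number of branches extant when `j + 1` branches are
present that have not yet bifurcated by the interval with `i + 1` branches,
i.e. the number of common blocks of the partitions into `j + 1` and `i + 1`
lineages. -/
noncomputable def FmatOf (n : ℕ) (ω : Fin (n - 1) → Fin n × Fin n) (i j : ℕ) : ℕ :=
  (blocksAt n ω (j + 1) ∩ blocksAt n ω (i + 1)).card

/-- The D-matrix entry `D i j = F i j - F i (j-1)`: the number of children of
the node creating the `(j+1)`-st branch that have not bifurcated by interval
`i`. -/
noncomputable def DmatOf (n : ℕ) (ω : Fin (n - 1) → Fin n × Fin n) (i j : ℕ) : ℤ :=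
  (FmatOf n ω i j : ℤ) - (FmatOf n ω i (j - 1) : ℤ)

/-- Probability of an event under the Yule / Kingman coalescent with `n`
leaves (uniform measure on merge-choice sequences). -/
noncomputable def coalP (n : ℕ) (A : (Fin (n - 1) → Fin n × Fin n) → Prop) : ℝ :=
  (((coalSpace n).filter A).card : ℝ) / ((coalSpace n).card : ℝ)

/-- Expectation of a random variable under the Yule / Kingman coalescent with
`n` leaves. -/
noncomputable def coalE (n : ℕ) (X : (Fin (n - 1) → Fin n × Fin n) → ℝ) : ℝ :=
  (∑ ω ∈ coalSpace n, X ω) / ((coalSpace n).card : ℝ)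

/-!
Write `Z_{i,k}` for the event that leaf `i` is external when `k` lineages remain, so that
`F_{n-1,k-1} = ∑ᵢ Z_{i,k}`. Resampling one merge of a uniform coalescent history leaves it uniform,
and a merge among `m` lineages that must miss `w` given lineages does so with probability
`C(m - w, 2) / C(m, 2)`. Telescoping these factors gives `P(Z_{i,k}) = k(k-1)/(n(n-1))` and,
for `i ≠ j` and `k ≤ l`, `P(Z_{i,k} ∧ Z_{j,l}) = k(k-1)(l-1)(l-2)/(n(n-1)²(n-2))`.
Summing over `i` and `j` gives the first two moments of the F-matrix entries, hence the covariance.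
-/

open Finset

section Resampling

variable {ι β : Type*} [DecidableEq ι] [Fintype ι]

lemma update_mem_piFinset {S : ι → Finset β} {ω : ι → β} (hω : ω ∈ Fintype.piFinset S)
    {t : ι} {b : β} (hb : b ∈ S t) : Function.update ω t b ∈ Fintype.piFinset S := by
  rw [Fintype.mem_piFinset] at hω ⊢
  intro s
  rcases eq_or_ne s t with rfl | hs
  · simpa using hb
  · simpa [hs] using hω s

/-- `(ω, b) ↦ (update ω t b, ω t)` is an involution of `piFinset S ×ˢ S t`. -/
lemma sum_piFinset_sum_update {M : Type*} [AddCommMonoid M] (S : ι → Finset β) (t : ι)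
    (f : (ι → β) → M) :
    ∑ ω ∈ Fintype.piFinset S, ∑ b ∈ S t, f (Function.update ω t b) =
      #(S t) • ∑ ω ∈ Fintype.piFinset S, f ω := by
  calc ∑ ω ∈ Fintype.piFinset S, ∑ b ∈ S t, f (Function.update ω t b)
      = ∑ x ∈ Fintype.piFinset S ×ˢ S t, f x.1 := by
        rw [← sum_product']
        refine sum_nbij' (fun x => (Function.update x.1 t x.2, x.1 t))
          (fun x => (Function.update x.1 t x.2, x.1 t)) ?_ ?_ ?_ ?_ (fun _ _ => rfl)
        all_goals
          rintro ⟨ω, b⟩ h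
          simp only [mem_product] at h
          simp [update_mem_piFinset h.1 h.2, Fintype.mem_piFinset.1 h.1 t]
    _ = #(S t) • ∑ ω ∈ Fintype.piFinset S, f ω := by
        rw [sum_product, smul_sum]
        simp only [sum_const]

end Resampling

section Collapse

variable {a b x y m : ℕ}

lemma collapse_of_lt (hab : a < b) (x : ℕ) :
    collapse a b x = if x = b then a else if b < x then x - 1 else x := by
  simp [collapse, max_eq_right hab.le, min_eq_left hab.le]

lemma collapse_eq_collapse_iff (hab : a < b) :
    collapse a b x = collapse a b y ↔ x = y ∨ x = a ∧ y = b ∨ x = b ∧ y = a := by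
  rw [collapse_of_lt hab, collapse_of_lt hab]
  split_ifs <;> omega

lemma collapse_lt (hab : a < b) (hb : b < m) (hx : x < m) : collapse a b x < m - 1 := by
  rw [collapse_of_lt hab]
  split_ifs <;> omega

lemma exists_collapse_eq (hab : a < b) (hb : b < m) (hy : y < m - 1) :
    ∃ x < m, collapse a b x = y := by
  rcases lt_or_ge y b with h | h
  · exact ⟨y, by omega, by rw [collapse_of_lt hab]; split_ifs <;> omega⟩
  · exact ⟨y + 1, by omega, by rw [collapse_of_lt hab]; split_ifs <;> omega⟩

end Collapse

section Chain

variable {n s t : ℕ} {ω ω' : Fin (n - 1) → Fin n × Fin n} {i j : Fin n}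

lemma chainMap_succ (ht : t < n - 1) (i : Fin n) :
    chainMap n ω (t + 1) i = collapse (ω ⟨t, ht⟩).1 (ω ⟨t, ht⟩).2 (chainMap n ω t i) := by
  simp only [chainMap, dif_pos ht]

lemma chainMap_lt (hω : ValidSeq n ω) (ht : t ≤ n - 1) (i : Fin n) :
    chainMap n ω t i < n - t := by
  induction t with
  | zero => exact i.2
  | succ t ih =>
    have ht' : t < n - 1 := by omega
    rw [chainMap_succ ht']
    have := collapse_lt (hω ⟨t, ht'⟩).1 (hω ⟨t, ht'⟩).2 (ih (by omega))
    omega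

lemma exists_chainMap_eq (hω : ValidSeq n ω) (ht : t ≤ n - 1) {y : ℕ} (hy : y < n - t) :
    ∃ i, chainMap n ω t i = y := by
  induction t generalizing y with
  | zero => exact ⟨⟨y, by omega⟩, rfl⟩
  | succ t ih =>
    have ht' : t < n - 1 := by omega
    obtain ⟨x, hx, rfl⟩ :=
      exists_collapse_eq (hω ⟨t, ht'⟩).1 (hω ⟨t, ht'⟩).2 (show y < n - t - 1 by omega)
    obtain ⟨i, hi⟩ := ih (by omega) hx
    exact ⟨i, by rw [chainMap_succ ht', hi]⟩

lemma chainMap_congr (h : ∀ s (hs : s < n - 1), s < t → ω ⟨s, hs⟩ = ω' ⟨s, hs⟩) :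
    chainMap n ω t = chainMap n ω' t := by
  induction t with
  | zero => rfl
  | succ t ih =>
    funext i
    simp only [chainMap, ih fun s hs hst => h s hs (by omega)]
    split_ifs with ht
    · rw [h t ht (by omega)]
    · rfl

lemma chainMap_eq_of_le (hst : s ≤ t) (h : chainMap n ω s i = chainMap n ω s j) :
    chainMap n ω t i = chainMap n ω t j := by
  induction t, hst using Nat.le_induction with
  | base => exact h
  | succ t _ ih =>
    simp only [chainMap]
    split_ifs <;> rw [ih]

lemma chainMap_update_of_le (ht : t < n - 1) (hst : s ≤ t) (p : Fin n × Fin n) :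
    chainMap n (Function.update ω ⟨t, ht⟩ p) s = chainMap n ω s :=
  chainMap_congr fun _ _ hs => Function.update_of_ne (by simp [Fin.ext_iff]; omega) _ _

end Chain

section External

variable {n s t k l : ℕ} {ω : Fin (n - 1) → Fin n × Fin n} {i j : Fin n}

/-- Indexed by the number `t` of merges performed, so `Zext n ω i k` is the case
`t = n - k` (`zext_iff_isExternalAt`). -/
def IsExternalAt (n : ℕ) (ω : Fin (n - 1) → Fin n × Fin n) (t : ℕ) (i : Fin n) : Prop :=
  ∀ j, chainMap n ω t j = chainMap n ω t i → j = i

lemma isExternalAt_zero : IsExternalAt n ω 0 i := fun _ h => Fin.ext h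

lemma IsExternalAt.anti (hst : s ≤ t) (h : IsExternalAt n ω t i) : IsExternalAt n ω s i :=
  fun j hj => h j (chainMap_eq_of_le hst hj)

lemma zext_iff_isExternalAt : Zext n ω i k ↔ IsExternalAt n ω (n - k) i := by
  simp only [Zext, IsExternalAt, eq_singleton_iff_unique_mem, blockOf, mem_filter, mem_univ,
    true_and]

lemma isExternalAt_update_of_le (ht : t < n - 1) (hst : s ≤ t) (p : Fin n × Fin n) :
    IsExternalAt n (Function.update ω ⟨t, ht⟩ p) s i ↔ IsExternalAt n ω s i := by
  simp only [IsExternalAt, chainMap_update_of_le ht hst]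

/-- If the lineage of `i` is one of the merged pair, the other merged label is carried by some
other leaf (`exists_chainMap_eq`), which then joins `i`. -/
lemma isExternalAt_succ_iff (hω : ValidSeq n ω) (ht : t < n - 1) :
    IsExternalAt n ω (t + 1) i ↔ IsExternalAt n ω t i ∧
      chainMap n ω t i ≠ (ω ⟨t, ht⟩).1 ∧ chainMap n ω t i ≠ (ω ⟨t, ht⟩).2 := by
  obtain ⟨hab, hb⟩ : _ ∧ _ < n - t := hω ⟨t, ht⟩
  have hsurj : ∀ y < n - t, ∃ j, chainMap n ω t j = y :=
    fun y hy => exists_chainMap_eq hω (by omega) hy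
  simp only [IsExternalAt, chainMap_succ ht, collapse_eq_collapse_iff hab]
  constructor
  · intro h
    refine ⟨fun j hj => h j (Or.inl hj), fun hia => ?_, fun hib => ?_⟩
    · obtain ⟨j, hj⟩ := hsurj _ hb
      have := h j (Or.inr (Or.inr ⟨hj, hia⟩))
      subst this
      omega
    · obtain ⟨j, hj⟩ := hsurj _ (show ((ω ⟨t, ht⟩).1 : ℕ) < n - t by omega)
      have := h j (Or.inr (Or.inl ⟨hj, hib⟩))
      subst this
      omega
  · rintro ⟨h, hia, hib⟩ j (hj | ⟨_, hj⟩ | ⟨_, hj⟩)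
    exacts [h j hj, absurd hj hib, absurd hj hia]

lemma zext_of_le (hkl : k ≤ l) (h : Zext n ω i k) : Zext n ω i l := by
  rw [zext_iff_isExternalAt] at h ⊢
  exact h.anti (by omega)

lemma blockOf_eq_of_mem (h : j ∈ blockOf n ω k i) : blockOf n ω k j = blockOf n ω k i := by
  simp only [blockOf, mem_filter, mem_univ, true_and] at h ⊢
  rw [h]

lemma blockOf_self : blockOf n ω n i = {i} := by
  ext j
  simp [blockOf, chainMap, Fin.val_inj]

lemma blocksAt_inter_blocksAt_self :
    blocksAt n ω k ∩ blocksAt n ω n =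
      ({i | Zext n ω i k} : Finset (Fin n)).map ⟨singleton, singleton_injective⟩ := by
  ext S
  simp only [blocksAt, blockOf_self, mem_inter, mem_map, mem_univ, true_and, mem_filter,
    Function.Embedding.coeFn_mk, mem_image]
  constructor
  · rintro ⟨⟨i, rfl⟩, j, hj⟩
    refine ⟨j, ?_, hj⟩
    rw [Zext, blockOf_eq_of_mem (hj ▸ mem_singleton_self j), hj]
  · rintro ⟨i, hi, rfl⟩
    exact ⟨⟨i, hi⟩, i, rfl⟩

lemma fmatOf_eq_sum (hk : 1 ≤ k) (hn : 1 ≤ n) :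
    (FmatOf n ω (n - 1) (k - 1) : ℝ) = ∑ i, if Zext n ω i k then 1 else 0 := by
  rw [FmatOf, Nat.sub_add_cancel hk, Nat.sub_add_cancel hn, blocksAt_inter_blocksAt_self,
    card_map, natCast_card_filter]

end External

def lineagePairs (n m : ℕ) : Finset (Fin n × Fin n) := {p | (p.1 : ℕ) < p.2 ∧ (p.2 : ℕ) < m}

lemma card_filter_lineagePairs {n m : ℕ} {g : Finset ℕ} (hm : m ≤ n) (hg : g ⊆ range m) :
    #{p ∈ lineagePairs n m | (p.1 : ℕ) ∉ g ∧ (p.2 : ℕ) ∉ g} = (m - #g).choose 2 := by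
  have hU : ∀ x ∈ range m \ g, x < n := fun x hx => by
    simp only [mem_sdiff, mem_range] at hx; omega
  rw [show m - #g = #((range m \ g).attachFin hU) by
    rw [card_attachFin, card_sdiff_of_subset hg, card_range], ← card_product_filter_lt]
  congr 1
  ext p
  simp only [lineagePairs, mem_filter, mem_univ, true_and, mem_product, mem_attachFin,
    mem_sdiff, mem_range, Fin.lt_def]
  constructor
  · rintro ⟨⟨h12, h2⟩, h1g, h2g⟩
    exact ⟨⟨⟨by omega, h1g⟩, h2, h2g⟩, h12⟩
  · rintro ⟨⟨⟨_, h1g⟩, h2, h2g⟩, h12⟩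
    exact ⟨⟨h12, h2⟩, h1g, h2g⟩

lemma card_lineagePairs {n m : ℕ} (hm : m ≤ n) : #(lineagePairs n m) = m.choose 2 := by
  simpa using card_filter_lineagePairs (g := ∅) hm (empty_subset _)

lemma coalSpace_eq_piFinset (n : ℕ) :
    coalSpace n = Fintype.piFinset fun s : Fin (n - 1) => lineagePairs n (n - s) := by
  ext ω
  simp [coalSpace, ValidSeq, lineagePairs, Fintype.mem_piFinset]

lemma card_coalSpace_pos {n : ℕ} : 0 < #(coalSpace n) := by
  rw [coalSpace_eq_piFinset, Fintype.card_piFinset]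
  refine prod_pos fun s _ => ?_
  rw [card_lineagePairs (Nat.sub_le _ _)]
  exact Nat.choose_pos (by omega)

section Recursion

variable {n t t₁ : ℕ} {i j : Fin n}

lemma update_mem_coalSpace {ω : Fin (n - 1) → Fin n × Fin n} (hω : ω ∈ coalSpace n)
    (ht : t < n - 1) {p : Fin n × Fin n} (hp : p ∈ lineagePairs n (n - t)) :
    Function.update ω ⟨t, ht⟩ p ∈ coalSpace n := by
  rw [coalSpace_eq_piFinset] at hω ⊢
  exact update_mem_piFinset hω hp

/-- The labels, after `t` merges, of the leaves that merge `t` must avoid. -/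
def avoidedLabels (n : ℕ) (ω : Fin (n - 1) → Fin n × Fin n) (i j : Fin n) (t₁ t : ℕ) :
    Finset ℕ :=
  if t < t₁ then {chainMap n ω t i, chainMap n ω t j} else {chainMap n ω t i}

lemma card_avoidedLabels {ω : Fin (n - 1) → Fin n × Fin n} (hij : i ≠ j)
    (hi : IsExternalAt n ω t i) :
    #(avoidedLabels n ω i j t₁ t) = if t < t₁ then 2 else 1 := by
  unfold avoidedLabels
  split_ifs
  · exact card_pair fun h => hij (hi j h.symm).symm
  · exact card_singleton _

lemma avoidedLabels_subset {ω : Fin (n - 1) → Fin n × Fin n} (hω : ValidSeq n ω)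
    (ht : t ≤ n - 1) : avoidedLabels n ω i j t₁ t ⊆ range (n - t) := by
  intro x hx
  unfold avoidedLabels at hx
  split_ifs at hx <;> simp only [mem_insert, mem_singleton] at hx <;>
    rcases hx with rfl | rfl <;> exact mem_range.2 (chainMap_lt hω ht _)

lemma isExternalAt_pair_update_iff {ω : Fin (n - 1) → Fin n × Fin n} (hω : ω ∈ coalSpace n)
    (ht : t < n - 1) {p : Fin n × Fin n} (hp : p ∈ lineagePairs n (n - t)) :
    (IsExternalAt n (Function.update ω ⟨t, ht⟩ p) (t + 1) i ∧
        IsExternalAt n (Function.update ω ⟨t, ht⟩ p) (min (t + 1) t₁) j) ↔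
      (IsExternalAt n ω t i ∧ IsExternalAt n ω (min t t₁) j) ∧
        (p.1 : ℕ) ∉ avoidedLabels n ω i j t₁ t ∧ (p.2 : ℕ) ∉ avoidedLabels n ω i j t₁ t := by
  have hω' : ValidSeq n (Function.update ω ⟨t, ht⟩ p) := by
    simpa [coalSpace] using update_mem_coalSpace hω ht hp
  have hsucc := fun k => isExternalAt_succ_iff (i := k) hω' ht
  simp only [Function.update_self, chainMap_update_of_le ht le_rfl,
    isExternalAt_update_of_le ht le_rfl] at hsucc
  by_cases htt : t < t₁
  · rw [min_eq_left htt.le, min_eq_left htt, hsucc, hsucc, avoidedLabels, if_pos htt]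
    simp only [mem_insert, mem_singleton]
    tauto
  · rw [min_eq_right (by omega : t₁ ≤ t + 1), min_eq_right (by omega : t₁ ≤ t), hsucc,
      isExternalAt_update_of_le ht (by omega), avoidedLabels, if_neg htt]
    simp only [mem_singleton]
    tauto

lemma card_filter_isExternalAt_pair_succ (hij : i ≠ j) (ht : t < n - 1) :
    #{ω ∈ coalSpace n | IsExternalAt n ω (t + 1) i ∧ IsExternalAt n ω (min (t + 1) t₁) j} *
        (n - t).choose 2 =
      #{ω ∈ coalSpace n | IsExternalAt n ω t i ∧ IsExternalAt n ω (min t t₁) j} *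
        (n - t - if t < t₁ then 2 else 1).choose 2 := by
  set E : ℕ → (Fin (n - 1) → Fin n × Fin n) → Prop :=
    fun s ω => IsExternalAt n ω s i ∧ IsExternalAt n ω (min s t₁) j
  set c := (n - t - if t < t₁ then 2 else 1).choose 2
  have hfiber : ∀ ω ∈ coalSpace n,
      #{p ∈ lineagePairs n (n - t) | E (t + 1) (Function.update ω ⟨t, ht⟩ p)} =
        if E t ω then c else 0 := by
    intro ω hω
    rw [filter_congr fun p hp => isExternalAt_pair_update_iff (t₁ := t₁) hω ht hp]
    by_cases hEt : E t ω
    · have hval : ValidSeq n ω := by simpa [coalSpace] using hω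
      rw [if_pos hEt, filter_congr fun _ _ => and_iff_right hEt,
        card_filter_lineagePairs (Nat.sub_le _ _) (avoidedLabels_subset hval ht.le),
        card_avoidedLabels hij hEt.1]
    · rw [if_neg hEt, filter_false_of_mem fun _ _ h => hEt h.1, card_empty]
  calc #{ω ∈ coalSpace n | E (t + 1) ω} * (n - t).choose 2
      = #(lineagePairs n (n - t)) • ∑ ω ∈ coalSpace n, if E (t + 1) ω then 1 else 0 := by
        rw [card_lineagePairs (Nat.sub_le _ _), sum_boole, smul_eq_mul, mul_comm]; rfl
    _ = ∑ ω ∈ coalSpace n, ∑ p ∈ lineagePairs n (n - t),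
          if E (t + 1) (Function.update ω ⟨t, ht⟩ p) then 1 else 0 := by
        rw [coalSpace_eq_piFinset]
        exact (sum_piFinset_sum_update (fun s : Fin (n - 1) => lineagePairs n (n - s))
          ⟨t, ht⟩ _).symm
    _ = ∑ ω ∈ coalSpace n, if E t ω then c else 0 := by
        refine sum_congr rfl fun ω hω => ?_
        rw [sum_boole, hfiber ω hω]; rfl
    _ = #{ω ∈ coalSpace n | E t ω} * c := by
        rw [sum_ite, sum_const_zero, add_zero, sum_const, smul_eq_mul]

end Recursion

section Probability

variable {n t t₁ k l : ℕ} {i j : Fin n}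

lemma coalP_eq_one {A : (Fin (n - 1) → Fin n × Fin n) → Prop} (h : ∀ ω ∈ coalSpace n, A ω) :
    coalP n A = 1 := by
  rw [coalP, filter_true_of_mem h, div_self (Nat.cast_ne_zero.2 card_coalSpace_pos.ne')]

lemma coalP_congr {A B : (Fin (n - 1) → Fin n × Fin n) → Prop}
    (h : ∀ ω ∈ coalSpace n, A ω ↔ B ω) : coalP n A = coalP n B := by
  rw [coalP, coalP, filter_congr h]

lemma coalP_isExternalAt_pair_succ (hij : i ≠ j) (ht : t < n - 1) :
    coalP n (fun ω => IsExternalAt n ω (t + 1) i ∧ IsExternalAt n ω (min (t + 1) t₁) j) *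
        ((n - t).choose 2 : ℕ) =
      coalP n (fun ω => IsExternalAt n ω t i ∧ IsExternalAt n ω (min t t₁) j) *
        ((n - t - if t < t₁ then 2 else 1).choose 2 : ℕ) := by
  simp only [coalP, div_mul_eq_mul_div]
  congr 1
  convert congrArg (Nat.cast : ℕ → ℝ) (card_filter_isExternalAt_pair_succ (t₁ := t₁) hij ht)
    using 1 <;> push_cast <;> congr

/-- Each merge that must avoid `w` marked lineages among `m` multiplies the probability by
`C(m - w, 2) / C(m, 2)`; the products telescope. -/
lemma coalP_isExternalAt_pair (hn : 3 ≤ n) (hij : i ≠ j) (ht : t ≤ n - 1) :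
    coalP n (fun ω => IsExternalAt n ω t i ∧ IsExternalAt n ω (min t t₁) j) =
      ((n : ℝ) - t) * ((n : ℝ) - t - 1) * ((n : ℝ) - (min t t₁ : ℕ) - 1) *
        ((n : ℝ) - (min t t₁ : ℕ) - 2) / ((n : ℝ) * ((n : ℝ) - 1) ^ 2 * ((n : ℝ) - 2)) := by
  have hn' : (3 : ℝ) ≤ n := by exact_mod_cast hn
  have h1 : (n : ℝ) - 1 ≠ 0 := by linarith
  have h2 : (n : ℝ) - 2 ≠ 0 := by linarith
  induction t with
  | zero =>
    rw [coalP_eq_one fun ω _ =>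
      ⟨isExternalAt_zero, by rw [Nat.zero_min]; exact isExternalAt_zero⟩]
    simp only [Nat.zero_min, Nat.cast_zero, sub_zero]
    field_simp
  | succ t ih =>
    have hC : (((n - t).choose 2 : ℕ) : ℝ) ≠ 0 :=
      Nat.cast_ne_zero.2 (Nat.choose_pos (by omega)).ne'
    have hnt : ((n - t : ℕ) : ℝ) = n - t := Nat.cast_sub (by omega)
    have hntw : ∀ w ≤ 2, ((n - t - w : ℕ) : ℝ) = n - t - w := fun w hw => by
      rw [Nat.cast_sub (by omega), hnt]
    apply mul_right_cancel₀ hC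
    rw [coalP_isExternalAt_pair_succ hij (by omega), ih (by omega), Nat.cast_choose_two,
      Nat.cast_choose_two, hnt]
    by_cases htt : t < t₁
    · rw [if_pos htt, hntw 2 le_rfl, min_eq_left htt.le, min_eq_left htt]
      push_cast
      field_simp
      ring
    · rw [if_neg htt, hntw 1 (by omega), min_eq_right (not_lt.1 htt),
        min_eq_right (by omega : t₁ ≤ t + 1)]
      push_cast
      field_simp
      ring

lemma coalP_zext (hn : 3 ≤ n) (i : Fin n) (hk : 1 ≤ k) (hkn : k ≤ n) :
    coalP n (fun ω => Zext n ω i k) = k * (k - 1) / (n * (n - 1)) := by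
  have : Nontrivial (Fin n) := Fin.nontrivial_iff_two_le.2 (by omega)
  obtain ⟨j, hji⟩ := exists_ne i
  have hn' : (3 : ℝ) ≤ n := by exact_mod_cast hn
  rw [coalP_congr (B := fun ω => IsExternalAt n ω (n - k) i ∧ IsExternalAt n ω (min (n - k) 0) j)
      fun ω _ => by rw [zext_iff_isExternalAt, Nat.min_zero, and_iff_left isExternalAt_zero],
    coalP_isExternalAt_pair hn hji.symm (by omega), Nat.min_zero, Nat.cast_sub hkn]
  have h1 : (n : ℝ) - 1 ≠ 0 := by linarith
  have h2 : (n : ℝ) - 2 ≠ 0 := by linarith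
  field_simp
  ring

lemma coalP_zext_pair (hn : 3 ≤ n) (hij : i ≠ j) (hk : 1 ≤ k) (hkl : k ≤ l) (hl : l ≤ n) :
    coalP n (fun ω => Zext n ω i k ∧ Zext n ω j l) =
      k * (k - 1) * (l - 1) * (l - 2) / (n * (n - 1) ^ 2 * (n - 2)) := by
  rw [coalP_congr (B := fun ω => IsExternalAt n ω (n - k) i ∧
      IsExternalAt n ω (min (n - k) (n - l)) j)
      fun ω _ => by rw [zext_iff_isExternalAt, zext_iff_isExternalAt, min_eq_right (by omega)],
    coalP_isExternalAt_pair hn hij (by omega), min_eq_right (by omega), Nat.cast_sub (by omega),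
    Nat.cast_sub hl]
  ring

end Probability

section Expectation

variable {n k l : ℕ}

lemma coalE_sum {ι : Type*} (s : Finset ι) (X : ι → (Fin (n - 1) → Fin n × Fin n) → ℝ) :
    coalE n (fun ω => ∑ x ∈ s, X x ω) = ∑ x ∈ s, coalE n (X x) := by
  simp only [coalE]
  rw [sum_comm, sum_div]

lemma coalE_indicator (A : (Fin (n - 1) → Fin n × Fin n) → Prop) [DecidablePred A] :
    coalE n (fun ω => if A ω then 1 else 0) = coalP n A := by
  rw [coalE, coalP, sum_boole]
  congr

lemma coalE_fmatOf (hn : 3 ≤ n) (hk : 1 ≤ k) (hkn : k ≤ n) :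
    coalE n (fun ω => (FmatOf n ω (n - 1) (k - 1) : ℝ)) = k * (k - 1) / (n - 1) := by
  have h1 : (n : ℝ) - 1 ≠ 0 := by
    have : (3 : ℝ) ≤ n := by exact_mod_cast hn
    linarith
  simp_rw [fmatOf_eq_sum hk (by omega : 1 ≤ n)]
  rw [coalE_sum]
  simp_rw [coalE_indicator, coalP_zext hn _ hk hkn]
  rw [sum_const, card_univ, Fintype.card_fin, nsmul_eq_mul]
  field_simp

/-- The diagonal terms of `∑ᵢ ∑ⱼ P(Z_{i,k} ∧ Z_{j,l})` reduce to `P(Z_{i,k})`, since an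
external branch at `k` lineages is still external at `l ≥ k` lineages. -/
lemma coalE_fmatOf_mul (hn : 3 ≤ n) (hk : 1 ≤ k) (hkl : k ≤ l) (hl : l ≤ n) :
    coalE n (fun ω => (FmatOf n ω (n - 1) (k - 1) : ℝ) * (FmatOf n ω (n - 1) (l - 1) : ℝ)) =
      k * (k - 1) / (n - 1) + k * (k - 1) * (l - 1) * (l - 2) / ((n - 1) * (n - 2)) := by
  have hn' : (3 : ℝ) ≤ n := by exact_mod_cast hn
  have h1 : (n : ℝ) - 1 ≠ 0 := by linarith
  have h2 : (n : ℝ) - 2 ≠ 0 := by linarith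
  have hrow : ∀ i : Fin n, ∑ j, coalP n (fun ω => Zext n ω i k ∧ Zext n ω j l) =
      k * (k - 1) / (n * (n - 1)) +
        (n - 1) * (k * (k - 1) * (l - 1) * (l - 2) / (n * (n - 1) ^ 2 * (n - 2))) := by
    intro i
    rw [← add_sum_erase _ _ (mem_univ i),
      coalP_congr fun ω _ => and_iff_left_of_imp (zext_of_le hkl), coalP_zext hn i hk (by omega),
      sum_congr rfl fun j hj => coalP_zext_pair hn (ne_of_mem_erase hj).symm hk hkl hl,
      sum_const, card_erase_of_mem (mem_univ i), card_univ, Fintype.card_fin, nsmul_eq_mul,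
      Nat.cast_sub (by omega), Nat.cast_one]
  simp_rw [fmatOf_eq_sum hk (by omega : 1 ≤ n), fmatOf_eq_sum (hk.trans hkl) (by omega : 1 ≤ n),
    sum_mul_sum, ite_zero_mul_ite_zero, mul_one]
  simp_rw [coalE_sum, coalE_indicator, hrow]
  rw [sum_const, card_univ, Fintype.card_fin, nsmul_eq_mul]
  field_simp

end Expectation

/-- Under the Yule model with `n` leaves, for `k ≤ l` the
covariance of same-row F-matrix entries is
`Cov(F_{n-1,k-1}, F_{n-1,l-1}) = k(k-1)[l(l+1) + n(n-2l-1)] / ((n-1)²(n-2))`. -/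
theorem yule_fmat_same_row_covariance (n k l : ℕ) (hn : 3 ≤ n)
    (hk : 2 ≤ k) (hkl : k ≤ l) (hl : l ≤ n) :
    coalE n (fun ω => (FmatOf n ω (n - 1) (k - 1) : ℝ) *
        (FmatOf n ω (n - 1) (l - 1) : ℝ)) -
      coalE n (fun ω => (FmatOf n ω (n - 1) (k - 1) : ℝ)) *
        coalE n (fun ω => (FmatOf n ω (n - 1) (l - 1) : ℝ)) =
    (k : ℝ) * ((k : ℝ) - 1) *
        ((l : ℝ) * ((l : ℝ) + 1) + (n : ℝ) * ((n : ℝ) - 2 * (l : ℝ) - 1)) /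
      (((n : ℝ) - 1) ^ 2 * ((n : ℝ) - 2)) := by
  have hk₁ : 1 ≤ k := by omega
  rw [coalE_fmatOf_mul hn hk₁ hkl hl, coalE_fmatOf hn hk₁ (hkl.trans hl),
    coalE_fmatOf hn (hk₁.trans hkl) hl]
  have hn' : (3 : ℝ) ≤ n := by exact_mod_cast hn
  have h1 : (n : ℝ) - 1 ≠ 0 := by linarith
  have h2 : (n : ℝ) - 2 ≠ 0 := by linarith
  field_simp
  ring
end

section
/- The Markov chain on strings encoding isochronous ranked tree shapes with n leaves — where a transition picks a coordinate i ∈ {2,...,n-1} uniformly at random and resamples t_i uniformly among values in {2,...,i} that do not already occur twice among the other entries — is irreducible and aperiodic with uniform stationary distribution on the space of valid strings of length n-1 (equivalently, on ranked tree shapes with n leaves). -/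
open scoped Classical

/-- A valid string encoding of an isochronous ranked tree shape with `n`
leaves: `t = (t₁, …, t_{n-1})` (here `t i` is the 1-based entry at position
`i + 1`) with `t₁ = 1`, `2 ≤ tₚ ≤ p` for positions `p > 1`, and no value
occurring more than twice. -/
def ValidStr (n : ℕ) (t : Fin (n - 1) → Fin n) : Prop :=
  (∀ i : Fin (n - 1), (i : ℕ) = 0 → (t i : ℕ) = 1) ∧
  (∀ i : Fin (n - 1), 1 ≤ (i : ℕ) → 2 ≤ (t i : ℕ) ∧ (t i : ℕ) ≤ (i : ℕ) + 1) ∧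
  (∀ v : Fin n, (Finset.univ.filter (fun i => t i = v)).card ≤ 2)

/-- The allowable values when resampling coordinate `i` (position `i + 1`) of
the string `t`: values `v` with `2 ≤ v ≤ i + 1` not already occurring twice
among the other entries. -/
noncomputable def allowSet (n : ℕ) (t : Fin (n - 1) → Fin n) (i : Fin (n - 1)) :
    Finset (Fin n) :=
  Finset.univ.filter (fun v => 2 ≤ (v : ℕ) ∧ (v : ℕ) ≤ (i : ℕ) + 1 ∧
    (Finset.univ.filter (fun j => j ≠ i ∧ t j = v)).card ≤ 1)

/-- The transition kernel of the Markov chain on tree strings: pick a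
coordinate at a position in `{2, …, n-1}` uniformly at random (there are
`n - 2` of them) and resample its entry uniformly among the allowable
values. -/
noncomputable def strKernel (n : ℕ) (t t' : Fin (n - 1) → Fin n) : ℝ :=
  (1 / ((n : ℝ) - 2)) *
    ∑ i ∈ Finset.univ.filter (fun i : Fin (n - 1) => 1 ≤ (i : ℕ)),
      (if (∀ j, j ≠ i → t' j = t j) ∧ t' i ∈ allowSet n t i then
        1 / ((allowSet n t i).card : ℝ) else 0)

/-- `m`-step transition probabilities of the Markov chain on tree strings. -/
noncomputable def strKernelPow (n : ℕ) :
    ℕ → (Fin (n - 1) → Fin n) → (Fin (n - 1) → Fin n) → ℝ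
  | 0, t, t' => if t = t' then 1 else 0
  | m + 1, t, t' => ∑ s : Fin (n - 1) → Fin n, strKernelPow n m t s * strKernel n s t'


section Aux

variable {n : ℕ}

lemma mem_allowSet_iff {t : Fin (n - 1) → Fin n} {i : Fin (n - 1)} {v : Fin n} :
    v ∈ allowSet n t i ↔ 2 ≤ (v : ℕ) ∧ (v : ℕ) ≤ (i : ℕ) + 1 ∧
      (Finset.univ.filter (fun j => j ≠ i ∧ t j = v)).card ≤ 1 := by
  simp [allowSet]

lemma allowSet_eq_of_agree {t t' : Fin (n - 1) → Fin n} {i : Fin (n - 1)}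
    (h : ∀ j, j ≠ i → t j = t' j) : allowSet n t i = allowSet n t' i := by
  unfold allowSet
  congr 1
  funext v
  have : (Finset.univ.filter (fun j => j ≠ i ∧ t j = v))
      = (Finset.univ.filter (fun j => j ≠ i ∧ t' j = v)) := by
    apply Finset.filter_congr
    intro j _
    constructor
    · rintro ⟨hj, he⟩; exact ⟨hj, (h j hj) ▸ he⟩
    · rintro ⟨hj, he⟩; exact ⟨hj, (h j hj).symm ▸ he⟩
  rw [this]

lemma self_mem_allowSet {t : Fin (n - 1) → Fin n} {i : Fin (n - 1)}
    (ht : ValidStr n t) (hi : 1 ≤ (i : ℕ)) : t i ∈ allowSet n t i := by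
  rw [mem_allowSet_iff]
  refine ⟨(ht.2.1 i hi).1, (ht.2.1 i hi).2, ?_⟩
  have hsub : (Finset.univ.filter (fun j => j ≠ i ∧ t j = t i))
      = (Finset.univ.filter (fun j => t j = t i)).erase i := by
    ext j
    simp [Finset.mem_erase, and_comm]
  rw [hsub, Finset.card_erase_of_mem (by simp)]
  have := ht.2.2 (t i)
  omega

lemma valid_of_step {t t' : Fin (n - 1) → Fin n} {i : Fin (n - 1)}
    (ht : ValidStr n t) (hi : 1 ≤ (i : ℕ))
    (hagree : ∀ j, j ≠ i → t' j = t j) (hmem : t' i ∈ allowSet n t i) :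
    ValidStr n t' := by
  rw [mem_allowSet_iff] at hmem
  refine ⟨?_, ?_, ?_⟩
  · intro j hj
    have hne : j ≠ i := by
      intro h; rw [h] at hj; omega
    rw [hagree j hne]; exact ht.1 j hj
  · intro j hj
    by_cases hji : j = i
    · subst hji; exact ⟨hmem.1, hmem.2.1⟩
    · rw [hagree j hji]; exact ht.2.1 j hj
  · intro v
    by_cases hv : t' i = v
    · have hsub : (Finset.univ.filter (fun j => t' j = v))
          ⊆ insert i (Finset.univ.filter (fun j => j ≠ i ∧ t j = v)) := by
        intro j hj
        simp only [Finset.mem_filter, Finset.mem_univ, true_and] at hj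
        by_cases hji : j = i
        · simp [hji]
        · simp only [Finset.mem_insert, Finset.mem_filter, Finset.mem_univ, true_and]
          exact Or.inr ⟨hji, (hagree j hji) ▸ hj⟩
      calc (Finset.univ.filter (fun j => t' j = v)).card
          ≤ (insert i (Finset.univ.filter (fun j => j ≠ i ∧ t j = v))).card :=
            Finset.card_le_card hsub
        _ ≤ (Finset.univ.filter (fun j => j ≠ i ∧ t j = v)).card + 1 :=
            Finset.card_insert_le _ _
        _ ≤ 2 := by have := hmem.2.2; rw [hv] at this; omega
    · have hsub : (Finset.univ.filter (fun j => t' j = v))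
          ⊆ (Finset.univ.filter (fun j => t j = v)) := by
        intro j hj
        simp only [Finset.mem_filter, Finset.mem_univ, true_and] at hj ⊢
        have hji : j ≠ i := by rintro rfl; exact hv hj
        rw [← hagree j hji]; exact hj
      exact le_trans (Finset.card_le_card hsub) (ht.2.2 v)

lemma mem_allowSet_of_valid {t t' : Fin (n - 1) → Fin n} {i : Fin (n - 1)}
    (ht' : ValidStr n t') (hi : 1 ≤ (i : ℕ))
    (hagree : ∀ j, j ≠ i → t' j = t j) : t' i ∈ allowSet n t i := by
  rw [← allowSet_eq_of_agree hagree]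
  exact self_mem_allowSet ht' hi

lemma strKernel_nonneg (hn : 3 ≤ n) (t t' : Fin (n - 1) → Fin n) :
    0 ≤ strKernel n t t' := by
  unfold strKernel
  apply mul_nonneg
  · apply div_nonneg zero_le_one
    have : (3 : ℝ) ≤ (n : ℝ) := by exact_mod_cast hn
    linarith
  · apply Finset.sum_nonneg
    intro i _
    split
    · positivity
    · exact le_refl 0

lemma strKernel_pos_of (hn : 3 ≤ n) {t t' : Fin (n - 1) → Fin n} {i : Fin (n - 1)}
    (hi : 1 ≤ (i : ℕ)) (hagree : ∀ j, j ≠ i → t' j = t j)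
    (hmem : t' i ∈ allowSet n t i) : 0 < strKernel n t t' := by
  unfold strKernel
  apply mul_pos
  · apply div_pos one_pos
    have : (3 : ℝ) ≤ (n : ℝ) := by exact_mod_cast hn
    linarith
  · apply Finset.sum_pos'
    · intro j _
      split
      · positivity
      · exact le_refl 0
    · refine ⟨i, by simp [hi], ?_⟩
      rw [if_pos ⟨hagree, hmem⟩]
      have hcard : 0 < (allowSet n t i).card :=
        Finset.card_pos.mpr ⟨t' i, hmem⟩
      positivity

lemma exists_of_strKernel_ne_zero {t t' : Fin (n - 1) → Fin n}
    (h : strKernel n t t' ≠ 0) :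
    ∃ i : Fin (n - 1), 1 ≤ (i : ℕ) ∧ (∀ j, j ≠ i → t' j = t j) ∧
      t' i ∈ allowSet n t i := by
  unfold strKernel at h
  have hsum : (∑ i ∈ Finset.univ.filter (fun i : Fin (n - 1) => 1 ≤ (i : ℕ)),
      (if (∀ j, j ≠ i → t' j = t j) ∧ t' i ∈ allowSet n t i then
        1 / ((allowSet n t i).card : ℝ) else 0)) ≠ 0 := by
    intro h0; rw [h0, mul_zero] at h; exact h rfl
  obtain ⟨i, hi, hne⟩ := Finset.exists_ne_zero_of_sum_ne_zero hsum
  simp only [Finset.mem_filter, Finset.mem_univ, true_and] at hi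
  by_cases hc : (∀ j, j ≠ i → t' j = t j) ∧ t' i ∈ allowSet n t i
  · exact ⟨i, hi, hc.1, hc.2⟩
  · rw [if_neg hc] at hne; exact absurd rfl hne

lemma step_symm (hn : 3 ≤ n) {t t' : Fin (n - 1) → Fin n}
    (ht : ValidStr n t) (h : 0 < strKernel n t t') :
    ValidStr n t' ∧ 0 < strKernel n t' t := by
  obtain ⟨i, hi, hagree, hmem⟩ := exists_of_strKernel_ne_zero (ne_of_gt h)
  have ht' := valid_of_step ht hi hagree hmem
  refine ⟨ht', ?_⟩
  exact strKernel_pos_of hn hi (fun j hj => (hagree j hj).symm)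
    (mem_allowSet_of_valid ht hi fun j hj => (hagree j hj).symm)

lemma strKernelPow_nonneg (hn : 3 ≤ n) (m : ℕ) (t t' : Fin (n - 1) → Fin n) :
    0 ≤ strKernelPow n m t t' := by
  induction m generalizing t t' with
  | zero => unfold strKernelPow; split <;> norm_num
  | succ m ih =>
    unfold strKernelPow
    exact Finset.sum_nonneg fun s _ => mul_nonneg (ih t s) (strKernel_nonneg hn s t')

lemma strKernelPow_append (hn : 3 ≤ n) {m : ℕ} {t s t' : Fin (n - 1) → Fin n}
    (h1 : 0 < strKernelPow n m t s) (h2 : 0 < strKernel n s t') :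
    0 < strKernelPow n (m + 1) t t' := by
  show 0 < ∑ u : Fin (n - 1) → Fin n, strKernelPow n m t u * strKernel n u t'
  apply Finset.sum_pos'
  · intro u _
    exact mul_nonneg (strKernelPow_nonneg hn m t u) (strKernel_nonneg hn u t')
  · exact ⟨s, Finset.mem_univ s, mul_pos h1 h2⟩

lemma strKernelPow_extract (hn : 3 ≤ n) {m : ℕ} {t t' : Fin (n - 1) → Fin n}
    (h : 0 < strKernelPow n (m + 1) t t') :
    ∃ s, 0 < strKernelPow n m t s ∧ 0 < strKernel n s t' := by
  have h' : (∑ u : Fin (n - 1) → Fin n, strKernelPow n m t u * strKernel n u t') ≠ 0 :=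
    ne_of_gt h
  obtain ⟨s, _, hs⟩ := Finset.exists_ne_zero_of_sum_ne_zero h'
  refine ⟨s, ?_, ?_⟩
  · rcases lt_or_eq_of_le (strKernelPow_nonneg hn m t s) with h1 | h1
    · exact h1
    · rw [← h1, zero_mul] at hs; exact absurd rfl hs
  · rcases lt_or_eq_of_le (strKernel_nonneg hn s t') with h1 | h1
    · exact h1
    · rw [← h1, mul_zero] at hs; exact absurd rfl hs

lemma strKernelPow_zero_pos {t t' : Fin (n - 1) → Fin n}
    (h : 0 < strKernelPow n 0 t t') : t = t' := by
  by_contra hne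
  simp only [strKernelPow, if_neg hne] at h
  exact lt_irrefl 0 h

lemma strKernelPow_one (t t' : Fin (n - 1) → Fin n) :
    strKernelPow n 1 t t' = strKernel n t t' := by
  show (∑ u : Fin (n - 1) → Fin n, strKernelPow n 0 t u * strKernel n u t') = _
  simp only [strKernelPow]
  rw [show (∑ u : Fin (n - 1) → Fin n, (if t = u then (1:ℝ) else 0) * strKernel n u t')
      = ∑ u : Fin (n - 1) → Fin n, (if t = u then strKernel n u t' else 0) by
    apply Finset.sum_congr rfl; intro u _; split <;> simp]
  rw [Finset.sum_ite_eq]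
  simp

lemma strKernelPow_concat (hn : 3 ≤ n) {m₁ m₂ : ℕ} {t s t' : Fin (n - 1) → Fin n}
    (h1 : 0 < strKernelPow n m₁ t s) (h2 : 0 < strKernelPow n m₂ s t') :
    0 < strKernelPow n (m₁ + m₂) t t' := by
  induction m₂ generalizing t' with
  | zero => rw [← strKernelPow_zero_pos h2]; exact h1
  | succ m ih =>
    obtain ⟨u, hu1, hu2⟩ := strKernelPow_extract hn h2
    exact strKernelPow_append hn (ih hu1) hu2

lemma strKernelPow_symm (hn : 3 ≤ n) {m : ℕ} {t t' : Fin (n - 1) → Fin n}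
    (ht : ValidStr n t) (h : 0 < strKernelPow n m t t') :
    ValidStr n t' ∧ 0 < strKernelPow n m t' t := by
  induction m generalizing t' with
  | zero =>
    have := strKernelPow_zero_pos h
    subst this
    exact ⟨ht, h⟩
  | succ m ih =>
    obtain ⟨s, hs1, hs2⟩ := strKernelPow_extract hn h
    obtain ⟨hsv, hsp⟩ := ih hs1
    obtain ⟨ht'v, ht'p⟩ := step_symm hn hsv hs2
    refine ⟨ht'v, ?_⟩
    have h1 : 0 < strKernelPow n 1 t' s := by rw [strKernelPow_one]; exact ht'p
    have := strKernelPow_concat hn h1 hsp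
    rwa [Nat.add_comm] at this

/-- the caterpillar string -/
def catStr (n : ℕ) : Fin (n - 1) → Fin n :=
  fun i => ⟨(i : ℕ) + 1, by omega⟩

lemma reach_cat (hn : 3 ≤ n) {t : Fin (n - 1) → Fin n} (ht : ValidStr n t) :
    ∃ m, 0 < strKernelPow n m t (catStr n) := by
  set s : ℕ → Fin (n - 1) → Fin n :=
    fun k j => if k ≤ (j : ℕ) then catStr n j else t j with hs
  have key : ∀ d, d ≤ n - 2 → ∃ m, 0 < strKernelPow n m t (s (n - 1 - d)) := by
    intro d
    induction d with
    | zero =>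
      intro _
      refine ⟨0, ?_⟩
      have : s (n - 1 - 0) = t := by
        funext j
        simp only [hs]
        rw [if_neg (by omega)]
      rw [this]
      simp [strKernelPow]
    | succ d ih =>
      intro hd
      obtain ⟨m, hm⟩ := ih (by omega)
      set k := n - 1 - d with hk
      have hk2 : 2 ≤ k := by omega
      have hklt : k - 1 < n - 1 := by omega
      set i : Fin (n - 1) := ⟨k - 1, hklt⟩ with hi
      have hival : (i : ℕ) = k - 1 := rfl
      have hstep : 0 < strKernel n (s k) (s (k - 1)) := by
        apply strKernel_pos_of hn (i := i) (by simp [hival]; omega)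
        · intro j hj
          have hjv : (j : ℕ) ≠ k - 1 := by
            intro hc; apply hj; exact Fin.ext hc
          simp only [hs]
          by_cases hc : k ≤ (j : ℕ)
          · rw [if_pos hc, if_pos (by omega)]
          · rw [if_neg hc, if_neg (by omega)]
        · rw [mem_allowSet_iff]
          have hsi : s (k - 1) i = catStr n i := by
            simp only [hs]; rw [if_pos (by simp [hival])]
          rw [hsi]
          have hcv : ((catStr n i : Fin n) : ℕ) = k := by
            simp [catStr, hival]; omega
          refine ⟨by omega, by simp [hcv, hival]; omega, ?_⟩
          have : (Finset.univ.filter (fun j => j ≠ i ∧ s k j = catStr n i)) = ∅ := by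
            apply Finset.eq_empty_of_forall_notMem
            intro j hj
            simp only [Finset.mem_filter, Finset.mem_univ, true_and] at hj
            obtain ⟨hjne, hjeq⟩ := hj
            have hjv : (j : ℕ) ≠ k - 1 := fun hc => hjne (Fin.ext hc)
            have hval : ((s k j : Fin n) : ℕ) = k := by rw [hjeq, hcv]
            by_cases hc : k ≤ (j : ℕ)
            · simp only [hs] at hval
              rw [if_pos hc] at hval
              simp [catStr] at hval
              omega
            · simp only [hs] at hval
              rw [if_neg hc] at hval
              have hj1 : (j : ℕ) + 1 ≤ k - 1 := by omega
              by_cases hz : (j : ℕ) = 0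
              · have := ht.1 j hz; omega
              · have := (ht.2.1 j (by omega)).2; omega
          rw [this]
          simp
      have heq : n - 1 - (d + 1) = k - 1 := by omega
      rw [heq]
      exact ⟨m + 1, strKernelPow_append hn hm hstep⟩
  obtain ⟨m, hm⟩ := key (n - 2) (le_refl _)
  have h1 : n - 1 - (n - 2) = 1 := by omega
  rw [h1] at hm
  have : s 1 = catStr n := by
    funext j
    simp only [hs]
    by_cases hc : 1 ≤ (j : ℕ)
    · rw [if_pos hc]
    · rw [if_neg hc]
      have hz : (j : ℕ) = 0 := by omega
      have := ht.1 j hz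
      apply Fin.ext
      simp [catStr, hz, this]
  rw [this] at hm
  exact ⟨m, hm⟩

lemma strKernel_symm {t t' : Fin (n - 1) → Fin n}
    (ht : ValidStr n t) (ht' : ValidStr n t') :
    strKernel n t t' = strKernel n t' t := by
  unfold strKernel
  congr 1
  apply Finset.sum_congr rfl
  intro i hi
  simp only [Finset.mem_filter, Finset.mem_univ, true_and] at hi
  by_cases hA : ∀ j, j ≠ i → t' j = t j
  · have hA' : ∀ j, j ≠ i → t j = t' j := fun j hj => (hA j hj).symm
    have hset : allowSet n t i = allowSet n t' i := allowSet_eq_of_agree hA'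
    rw [if_pos ⟨hA, mem_allowSet_of_valid ht' hi hA⟩,
        if_pos ⟨hA', mem_allowSet_of_valid ht hi hA'⟩, hset]
  · rw [if_neg (fun hc => hA hc.1), if_neg (fun hc => hA (fun j hj => (hc.1 j hj).symm))]

lemma card_pos_filter (hn : 3 ≤ n) :
    (Finset.univ.filter (fun i : Fin (n - 1) => 1 ≤ (i : ℕ))).card = n - 2 := by
  have hz : (⟨0, by omega⟩ : Fin (n - 1)) ∈ (Finset.univ : Finset (Fin (n - 1))) :=
    Finset.mem_univ _
  have : (Finset.univ.filter (fun i : Fin (n - 1) => 1 ≤ (i : ℕ)))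
      = Finset.univ.erase ⟨0, by omega⟩ := by
    ext i
    simp only [Finset.mem_filter, Finset.mem_univ, true_and, Finset.mem_erase, and_true]
    constructor
    · intro h hc
      rw [hc] at h
      simp at h
    · intro h
      have : (i : ℕ) ≠ 0 := by
        intro hc
        exact h (Fin.ext hc)
      omega
  rw [this, Finset.card_erase_of_mem hz, Finset.card_univ, Fintype.card_fin]
  omega

lemma rowsum (hn : 3 ≤ n) {t' : Fin (n - 1) → Fin n} (ht' : ValidStr n t') :
    (∑ t : Fin (n - 1) → Fin n, strKernel n t' t) = 1 := by
  unfold strKernel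
  rw [← Finset.mul_sum, Finset.sum_comm]
  have hinner : ∀ i ∈ Finset.univ.filter (fun i : Fin (n - 1) => 1 ≤ (i : ℕ)),
      (∑ t : Fin (n - 1) → Fin n,
        (if (∀ j, j ≠ i → t j = t' j) ∧ t i ∈ allowSet n t' i then
          1 / ((allowSet n t' i).card : ℝ) else 0)) = 1 := by
    intro i hi
    simp only [Finset.mem_filter, Finset.mem_univ, true_and] at hi
    rw [← Finset.sum_filter]
    rw [Finset.sum_const]
    have hcardeq : (Finset.univ.filter (fun t : Fin (n - 1) → Fin n =>
        (∀ j, j ≠ i → t j = t' j) ∧ t i ∈ allowSet n t' i)).card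
        = (allowSet n t' i).card := by
      apply Finset.card_bij' (fun t _ => t i) (fun v _ => Function.update t' i v)
      · intro t hta
        simp only [Finset.mem_filter, Finset.mem_univ, true_and] at hta
        exact hta.2
      · intro v hv
        simp only [Finset.mem_filter, Finset.mem_univ, true_and]
        constructor
        · intro j hj
          exact Function.update_of_ne hj _ _
        · rw [Function.update_self]; exact hv
      · intro t hta
        simp only [Finset.mem_filter, Finset.mem_univ, true_and] at hta
        funext j
        by_cases hj : j = i
        · subst hj; rw [Function.update_self]
        · rw [Function.update_of_ne hj, hta.1 j hj]
      · intro v hv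
        rw [Function.update_self]
    rw [hcardeq]
    have hpos : 0 < (allowSet n t' i).card :=
      Finset.card_pos.mpr ⟨t' i, self_mem_allowSet ht' hi⟩
    rw [nsmul_eq_mul]
    rw [mul_one_div, div_self (by exact_mod_cast hpos.ne')]
  rw [Finset.sum_congr rfl hinner, Finset.sum_const, card_pos_filter hn, nsmul_eq_mul,
    mul_one]
  have hne : ((n : ℝ) - 2) ≠ 0 := by
    have : (3 : ℝ) ≤ (n : ℝ) := by exact_mod_cast hn
    linarith
  rw [show ((n - 2 : ℕ) : ℝ) = (n : ℝ) - 2 by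
    rw [Nat.cast_sub (by omega)]; norm_num]
  rw [one_div, inv_mul_cancel₀ hne]

end Aux


/-- The Markov chain on strings encoding isochronous ranked
tree shapes with `n` leaves — pick a coordinate in positions `{2, …, n-1}`
uniformly and resample it uniformly among allowable values — is irreducible
(any two valid strings communicate), aperiodic (every valid string has a
positive self-transition probability), and has the uniform distribution on
valid strings as stationary distribution. -/
theorem strKernel_irreducible_aperiodic_uniform_stationary (n : ℕ) (hn : 3 ≤ n) :
    (∀ t t', ValidStr n t → ValidStr n t' →
      ∃ m : ℕ, 0 < strKernelPow n m t t') ∧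
    (∀ t, ValidStr n t → 0 < strKernel n t t) ∧
    (∀ t', ValidStr n t' →
      ∑ t ∈ Finset.univ.filter (ValidStr n), strKernel n t t' = 1) := by
  refine ⟨?_, ?_, ?_⟩
  · intro t t' ht ht'
    obtain ⟨m₁, h₁⟩ := reach_cat hn ht
    obtain ⟨m₂, h₂⟩ := reach_cat hn ht'
    obtain ⟨_, h₂'⟩ := strKernelPow_symm hn ht' h₂
    exact ⟨m₁ + m₂, strKernelPow_concat hn h₁ h₂'⟩
  · intro t ht
    have hi : (1 : ℕ) ≤ ((⟨1, by omega⟩ : Fin (n - 1)) : ℕ) := le_refl 1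
    exact strKernel_pos_of hn hi (fun j _ => rfl)
      (self_mem_allowSet ht hi)
  · intro t' ht'
    have hsymm : (∑ t ∈ Finset.univ.filter (ValidStr n), strKernel n t t')
        = ∑ t ∈ Finset.univ.filter (ValidStr n), strKernel n t' t := by
      apply Finset.sum_congr rfl
      intro t htm
      simp only [Finset.mem_filter, Finset.mem_univ, true_and] at htm
      exact strKernel_symm htm ht'
    rw [hsymm]
    have hsplit := Finset.sum_filter_add_sum_filter_not Finset.univ (ValidStr n)
      (fun t => strKernel n t' t)
    have hzero : (∑ t ∈ Finset.univ.filter (fun t => ¬ ValidStr n t),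
        strKernel n t' t) = 0 := by
      apply Finset.sum_eq_zero
      intro t htm
      simp only [Finset.mem_filter, Finset.mem_univ, true_and] at htm
      by_contra hne
      have hpos : 0 < strKernel n t' t :=
        lt_of_le_of_ne (strKernel_nonneg hn t' t) (Ne.symm hne)
      exact htm (step_symm hn ht' hpos).1
    have := rowsum hn ht'
    rw [← hsplit, hzero, add_zero] at this
    exact this
end

section
/- Every valid isochronous tree string t = (1, t_2, ..., t_{n-1}) is connected to the caterpillar string t* = (1, 2, ..., n-1) by a sequence of at most n-2 single-coordinate moves, each replacing one entry t_i by i while keeping the string valid at every step. -/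
open scoped Classical

/-- The caterpillar (most unbalanced) string `t* = (1, 2, …, n-1)`: the entry
at 1-based position `p` is `p` for `p ≥ 2` (and `t*₁ = 1`). -/
def caterpillarStr (n : ℕ) : Fin (n - 1) → Fin n := fun i =>
  ⟨(i : ℕ) + 1, by have := i.isLt; omega⟩

/-- Every valid isochronous tree string is connected to the
caterpillar string `(1, 2, …, n-1)` by at most `n - 2` single-coordinate moves,
each replacing one entry `t_i` by its position `i`, with the string remaining
valid after every step. -/
theorem string_connected_to_caterpillar (n : ℕ) (hn : 2 ≤ n)
    (t : Fin (n - 1) → Fin n) (ht : ValidStr n t) :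
    ∃ (m : ℕ) (c : ℕ → (Fin (n - 1) → Fin n)),
      m ≤ n - 2 ∧ c 0 = t ∧ c m = caterpillarStr n ∧
      ∀ s < m, ValidStr n (c (s + 1)) ∧
        ∃ i : Fin (n - 1), 1 ≤ (i : ℕ) ∧
          c (s + 1) = Function.update (c s) i
            ⟨(i : ℕ) + 1, by have := i.isLt; omega⟩ := by
  classical
  obtain ⟨h1, h2, h3⟩ := ht
  refine ⟨n - 2, fun s => fun j => if n - 1 - s ≤ (j : ℕ) then caterpillarStr n j else t j,
    le_refl _, ?_, ?_, ?_⟩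
  · funext j
    exact if_neg (by have := j.isLt; omega)
  · funext j
    by_cases h : n - 1 - (n - 2) ≤ (j : ℕ)
    · simp [h]
    · simp only [if_neg h]
      have hj0 : (j : ℕ) = 0 := by have := j.isLt; omega
      have ht0 := h1 j hj0
      apply Fin.ext
      simp [caterpillarStr, hj0, ht0]
  · intro s hs
    have hthrlt : n - 2 - s < n - 1 := by omega
    constructor
    · refine ⟨?_, ?_, ?_⟩
      · intro j hj0
        beta_reduce
        rw [if_neg (by omega)]
        exact h1 j hj0
      · intro j hj1
        beta_reduce
        by_cases h : n - 1 - (s + 1) ≤ (j : ℕ)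
        · rw [if_pos h]
          simp only [caterpillarStr]
          omega
        · rw [if_neg h]; exact h2 j hj1
      · intro v
        by_cases hv : n - 1 - s ≤ (v : ℕ)
        · refine le_trans (Finset.card_le_one.mpr ?_) (by norm_num)
          intro a ha b hb
          simp only [Finset.mem_filter] at ha hb
          have key : ∀ x : Fin (n - 1),
              (if n - 1 - (s + 1) ≤ (x : ℕ) then caterpillarStr n x else t x) = v →
              (x : ℕ) = (v : ℕ) - 1 := by
            intro x hx
            by_cases hxr : n - 1 - (s + 1) ≤ (x : ℕ)
            · rw [if_pos hxr] at hx
              have hval : (caterpillarStr n x : ℕ) = (v : ℕ) := by rw [hx]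
              simp only [caterpillarStr] at hval
              omega
            · rw [if_neg hxr] at hx
              exfalso
              have hxv : (t x : ℕ) = (v : ℕ) := by rw [hx]
              by_cases hx0 : (x : ℕ) = 0
              · have := h1 x hx0; omega
              · have := (h2 x (by omega)).2; omega
          have hka := key a ha.2
          have hkb := key b hb.2
          exact Fin.ext (by omega)
        · refine le_trans (Finset.card_le_card ?_) (h3 v)
          intro a ha
          simp only [Finset.mem_filter, Finset.mem_univ, true_and] at ha ⊢
          by_cases hxr : n - 1 - (s + 1) ≤ (a : ℕ)
          · exfalso
            rw [if_pos hxr] at ha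
            have hval : (caterpillarStr n a : ℕ) = (v : ℕ) := by rw [ha]
            simp only [caterpillarStr] at hval
            omega
          · rwa [if_neg hxr] at ha
    · refine ⟨⟨n - 2 - s, hthrlt⟩, by simp; omega, ?_⟩
      funext j
      beta_reduce
      rw [Function.update_apply]
      by_cases hj : j = (⟨n - 2 - s, hthrlt⟩ : Fin (n - 1))
      · rw [if_pos hj]
        subst hj
        rw [if_pos (by simp; omega)]
        simp [caterpillarStr]
      · rw [if_neg hj]
        have hjne : (j : ℕ) ≠ n - 2 - s := fun h => hj (Fin.ext h)
        by_cases h : n - 1 - (s + 1) ≤ (j : ℕ)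
        · rw [if_pos h, if_pos (by omega)]
        · rw [if_neg h, if_neg (by omega)]
end
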